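/- Let w = w₁⋯w_p be a reduced expression in a Coxeter group and let x ≤ w. Define r_{p+1}(x) = x and, for i from p down to 1, set r_i(x) = r_{i+1}(x) if w_i is a right ascent of r_{i+1}(x), and r_i(x) = r_{i+1}(x)·w_i if w_i is a right descent of r_{i+1}(x). Then r_1(x) is the identity element of W. -/

import Mathlib

/-!
By the subword property, `x ≤ w` makes `x` the product of a subword of every reduced word for
`w`. With Bruhat order defined by reflection chains, this comes from the strong exchange
property, proved with Björner–Brenti's parity representation of `W` on `W × ZMod 2`, and from
the fact that `u ≤ v` implies `u s ≤ v` or `u s ≤ v s`. Now if `ω = ω' s` and `x ≤ w`,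
splitting a subword for `x` into its part in `ω'` and possibly the final `s` shows
`min(x, x s) ≤ w s = π ω'`. So each greedy step keeps the current element below the product
of the letters not yet read, which is finally `1`.
-/

open CoxeterSystem
open scoped Classical

variable {B W : Type*} [Group W] {M : CoxeterMatrix B}

/-- The subword of `ω` selected by the mask `σ` (positions with mask-value `true`). -/
def maskSubword {α : Type*} (ω : List α) (σ : List Bool) : List α :=
  (ω.zip σ).filterMap (fun p => if p.2 then some p.1 else none)

/-- The group element `w^σ` determined by a mask `σ` on the word `ω`. -/
def maskProd (cs : CoxeterSystem M W) (ω : List B) (σ : List Bool) : W :=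
  cs.wordProd (maskSubword ω σ)

/-- Bruhat order: `x ≤ w` iff some reduced word for `w` has a subword whose product is `x`. -/
def bruhatLE (cs : CoxeterSystem M W) (x w : W) : Prop :=
  ∃ ω φ : List B, cs.IsReduced ω ∧ cs.wordProd ω = w ∧ φ.Sublist ω ∧ cs.wordProd φ = x

/-- Strict Bruhat order. -/
def bruhatLT (cs : CoxeterSystem M W) (x w : W) : Prop :=
  bruhatLE cs x w ∧ x ≠ w

/-- `z` covers `x` in Bruhat order. -/
def bruhatCovers (cs : CoxeterSystem M W) (x z : W) : Prop :=
  bruhatLT cs x z ∧ cs.length z = cs.length x + 1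

/-- Position `j` (0-indexed) is a defect of the mask `σ` on the word `ω`:
multiplying the product of the first `j` masked letters by `ω_j` decreases length. -/
def IsDefect (cs : CoxeterSystem M W) (ω : List B) (σ : List Bool) (j : ℕ) : Prop :=
  ∃ h : j < ω.length, cs.IsRightDescent (maskProd cs (ω.take j) (σ.take j)) (ω.get ⟨j, h⟩)

/-- A constant mask: a mask with no defect positions. -/
def IsConstantMask (cs : CoxeterSystem M W) (ω : List B) (σ : List Bool) : Prop :=
  σ.length = ω.length ∧ ∀ j, ¬ IsDefect cs ω σ j

/-- The greedy right-to-left algorithm: process the letters of the word from right to left,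
multiplying by each letter that is a right descent of the current element. -/

noncomputable def greedyAux (cs : CoxeterSystem M W) : W → List B → W
  | x, [] => x
  | x, i :: rest =>
      greedyAux cs (if cs.IsRightDescent x i then x * cs.simple i else x) rest


theorem List.sublist_append_singleton_iff {α : Type*} {φ ω : List α} {a : α} :
    φ.Sublist (ω ++ [a]) ↔ φ.Sublist ω ∨ ∃ φ₁, φ₁.Sublist ω ∧ φ = φ₁ ++ [a] := by
  constructor
  · intro h
    obtain ⟨φ₁, φ₂, rfl, h₁, h₂⟩ := List.sublist_append_iff.mp h
    rcases List.sublist_singleton.mp h₂ with rfl | rfl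
    · exact .inl (by simpa using h₁)
    · exact .inr ⟨φ₁, h₁, rfl⟩
  · rintro (h | ⟨φ₁, h₁, rfl⟩)
    · exact List.sublist_append_of_sublist_left h
    · exact h₁.append_right [a]

namespace CoxeterSystem

variable (cs : CoxeterSystem M W)

local prefix:100 "s " => cs.simple
local prefix:100 "π " => cs.wordProd
local prefix:100 "ℓ " => cs.length
local prefix:100 "ris " => cs.rightInvSeq

theorem simple_mul_mul_simple_eq_iff (i : B) (t u : W) :
    s i * t * s i = u ↔ t = s i * u * s i := by
  constructor <;> rintro rfl <;> simp [mul_assoc]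

theorem simple_mul_mul_simple_eq_simple_iff (i : B) (t : W) :
    s i * t * s i = s i ↔ t = s i := by
  rw [simple_mul_mul_simple_eq_iff, simple_mul_simple_cancel_right]

/-- The permutation `η_i` of Björner–Brenti, here acting on all of `W × ZMod 2` rather than
on reflections only. -/
noncomputable def parityPerm (i : B) : Equiv.Perm (W × ZMod 2) :=
  Function.Involutive.toPerm (fun p => (s i * p.1 * s i, p.2 + if p.1 = s i then 1 else 0)) <| by
    rintro ⟨t, z⟩
    dsimp only
    rw [simple_mul_mul_simple_eq_simple_iff, add_assoc, CharTwo.add_self_eq_zero, add_zero]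
    simp [mul_assoc]

theorem parityPerm_apply (i : B) (t : W) (z : ZMod 2) :
    cs.parityPerm i (t, z) = (s i * t * s i, z + if t = s i then 1 else 0) := rfl

theorem parityPerm_mul_pow_apply (i j : B) (k : ℕ) (t : W) (z : ZMod 2) :
    ((cs.parityPerm i * cs.parityPerm j) ^ k) (t, z) =
      ((s i * s j) ^ k * t * (s j * s i) ^ k,
        z + ∑ n ∈ Finset.range (2 * k), if t = (s j * s i) ^ n * s j then 1 else 0) := by
  induction k generalizing t z with
  | zero => simp
  | succ k ih =>
    have hshift (n : ℕ) : (s i * (s j * t * s j) * s i = (s j * s i) ^ n * s j) ↔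
        t = (s j * s i) ^ (n + 1 + 1) * s j := by
      rw [simple_mul_mul_simple_eq_iff, simple_mul_mul_simple_eq_iff, pow_succ', pow_succ]
      simp only [mul_assoc]
    have hone : (s j * t * s j = s i) ↔ t = (s j * s i) ^ (0 + 1) * s j := by
      rw [simple_mul_mul_simple_eq_iff, zero_add, pow_one, mul_assoc]
    rw [pow_succ, Equiv.Perm.mul_apply, Equiv.Perm.mul_apply, parityPerm_apply,
      parityPerm_apply, ih, show 2 * (k + 1) = 2 * k + 1 + 1 by ring,
      Finset.sum_range_succ', Finset.sum_range_succ']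
    refine Prod.ext ?_ ?_
    · rw [pow_succ, pow_succ']
      simp only [mul_assoc]
    · simp only [hshift, hone, pow_zero, one_mul]
      ring

theorem isLiftable_parityPerm : M.IsLiftable cs.parityPerm := by
  intro i j
  ext ⟨t, z⟩ : 1
  have hperiodic (n : ℕ) : (s j * s i) ^ (M i j + n) = (s j * s i) ^ n := by
    rw [pow_add, simple_mul_simple_pow', one_mul]
  rw [parityPerm_mul_pow_apply, two_mul, Finset.sum_range_add]
  simp_rw [hperiodic, CharTwo.add_self_eq_zero, simple_mul_simple_pow, simple_mul_simple_pow']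
  simp

noncomputable def parityRep : W →* Equiv.Perm (W × ZMod 2) :=
  cs.lift ⟨cs.parityPerm, cs.isLiftable_parityPerm⟩

/-- Björner–Brenti's `η(w; t)`. -/
noncomputable def reflParity (w t : W) : ZMod 2 := (cs.parityRep w (t, 0)).2

theorem parityRep_simple (i : B) : cs.parityRep (s i) = cs.parityPerm i :=
  cs.lift_apply_simple cs.isLiftable_parityPerm i

theorem parityRep_apply (w t : W) (z : ZMod 2) :
    cs.parityRep w (t, z) = (w * t * w⁻¹, z + cs.reflParity w t) := by
  induction w using cs.simple_induction_left generalizing t z with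
  | one => simp [reflParity]
  | mul_simple_left w i ih =>
    have hstep (z : ZMod 2) : cs.parityRep (s i * w) (t, z) =
        (s i * (w * t * w⁻¹) * s i, z + cs.reflParity w t + if w * t * w⁻¹ = s i then 1 else 0) := by
      rw [map_mul, Equiv.Perm.mul_apply, ih, parityRep_simple, parityPerm_apply]
    rw [reflParity, hstep, hstep, mul_inv_rev, inv_simple]
    refine Prod.ext ?_ ?_
    · simp only [mul_assoc]
    · ring

theorem reflParity_one (t : W) : cs.reflParity 1 t = 0 := by
  simp [reflParity]

theorem reflParity_mul (a b t : W) :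
    cs.reflParity (a * b) t = cs.reflParity b t + cs.reflParity a (b * t * b⁻¹) := by
  rw [reflParity, map_mul, Equiv.Perm.mul_apply, parityRep_apply, parityRep_apply, zero_add]

theorem reflParity_simple (i : B) (t : W) :
    cs.reflParity (s i) t = if t = s i then 1 else 0 := by
  rw [reflParity, parityRep_simple, parityPerm_apply, zero_add]

theorem reflParity_wordProd (ω : List B) (t : W) :
    cs.reflParity (π ω) t = (ris ω).count t := by
  induction ω with
  | nil => simp [reflParity_one]
  | cons i ω ih =>
    have hconj : π ω * t * (π ω)⁻¹ = s i ↔ (π ω)⁻¹ * s i * π ω = t := by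
      constructor <;> intro h <;> rw [← h] <;> group
    rw [wordProd_cons, reflParity_mul, ih, reflParity_simple, rightInvSeq, List.count_cons]
    simp only [hconj, beq_iff_eq]
    split_ifs <;> simp

theorem reflParity_self_of_isReflection {t : W} (ht : cs.IsReflection t) :
    cs.reflParity t t = 1 := by
  obtain ⟨g, i, rfl⟩ := ht
  have hinv := cs.reflParity_mul g g⁻¹ (g * s i * g⁻¹)
  have hconj : g⁻¹ * (g * s i * g⁻¹) * g⁻¹⁻¹ = s i := by group
  rw [mul_inv_cancel, reflParity_one, hconj] at hinv
  rw [reflParity_mul, hconj, reflParity_mul, inv_simple, simple_mul_simple_cancel_right,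
    reflParity_simple, if_pos rfl]
  linear_combination -hinv

theorem mem_rightInvSeq_of_reflParity_eq_one {ω : List B} {t : W}
    (h : cs.reflParity (π ω) t = 1) : t ∈ ris ω := by
  rw [reflParity_wordProd] at h
  refine List.count_pos_iff.mp (Nat.pos_of_ne_zero fun h0 => ?_)
  simp [h0] at h

theorem reflParity_eq_one_of_isRightInversion {w t : W} (h : cs.IsRightInversion w t) :
    cs.reflParity w t = 1 := by
  obtain ⟨ht, hlt⟩ := h
  -- otherwise `η(w t; t) = 1`, making `t` a right inversion of `w t` as well
  by_contra hne
  have h0 : cs.reflParity w t = 0 := by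
    revert hne
    generalize cs.reflParity w t = a
    revert a
    decide
  obtain ⟨ρ, hρ, hρw⟩ := cs.exists_isReduced (w * t)
  have hmem : t ∈ ris ρ := by
    apply mem_rightInvSeq_of_reflParity_eq_one
    rw [← hρw, reflParity_mul, reflParity_self_of_isReflection cs ht,
      show t * t * t⁻¹ = t by group, h0, add_zero]
  have hlt' := (cs.isRightInversion_of_mem_rightInvSeq hρ hmem).2
  rw [← hρw, mul_assoc, ht.mul_self, mul_one] at hlt'
  omega

/-- The strong exchange property. -/
theorem exists_wordProd_eraseIdx_eq_mul_of_isRightInversion {ω : List B} {t : W}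
    (h : cs.IsRightInversion (π ω) t) : ∃ k < ω.length, π (ω.eraseIdx k) = π ω * t := by
  obtain ⟨k, hk, hkt⟩ := List.mem_iff_getElem.mp
    (cs.mem_rightInvSeq_of_reflParity_eq_one (cs.reflParity_eq_one_of_isRightInversion h))
  refine ⟨k, by simpa using hk, ?_⟩
  rw [← wordProd_mul_getD_rightInvSeq, List.getD_eq_getElem _ _ hk, hkt]

theorem isRightDescent_wordProd_mul_simple {ω : List B} {i : B} (hω : cs.IsReduced (ω ++ [i])) :
    cs.IsRightDescent (π ω * s i) i := by
  have hlen := cs.length_wordProd_le ω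
  rw [IsRightDescent, simple_mul_simple_cancel_right, ← wordProd_singleton, ← wordProd_append,
    hω.eq, List.length_append, List.length_singleton]
  omega

/-- `u < u t = v` for a reflection `t` with `ℓ u < ℓ v`. -/
def BruhatStep (u v : W) : Prop := ∃ t, cs.IsRightInversion v t ∧ u = v * t

/-- Bruhat order by its definition through reflection chains; `bruhatLE` is its subword
characterization. -/
def BruhatChain : W → W → Prop := Relation.ReflTransGen cs.BruhatStep

variable {cs}

theorem IsReduced.of_append_singleton {ω : List B} {i : B} (hω : cs.IsReduced (ω ++ [i])) :
    cs.IsReduced ω := by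
  simpa using hω.take ω.length

theorem bruhatStep_mul_simple_of_isRightDescent {w : W} {i : B} (h : cs.IsRightDescent w i) :
    cs.BruhatStep (w * s i) w :=
  ⟨s i, ⟨cs.isReflection_simple i, h⟩, rfl⟩

theorem BruhatChain.mul_simple_of_isRightDescent {y w : W} {i : B} (h : cs.BruhatChain y w)
    (hy : cs.IsRightDescent y i) : cs.BruhatChain (y * s i) w :=
  .head (bruhatStep_mul_simple_of_isRightDescent hy) h

theorem BruhatChain.exists_sublist {x w : W} (h : cs.BruhatChain x w) {ω : List B}
    (hω : π ω = w) : ∃ φ, φ.Sublist ω ∧ π φ = x := by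
  induction h generalizing ω with
  | refl => exact ⟨ω, .refl ω, hω⟩
  | tail _ hstep ih =>
    obtain ⟨t, ht, rfl⟩ := hstep
    subst hω
    obtain ⟨k, -, hk⟩ := cs.exists_wordProd_eraseIdx_eq_mul_of_isRightInversion ht
    obtain ⟨φ, hφ, rfl⟩ := ih hk
    exact ⟨φ, hφ.trans (List.eraseIdx_sublist ω k), rfl⟩

theorem BruhatStep.mul_simple_eq_of_length_lt {u v : W} (h : cs.BruhatStep u v) {i : B}
    (hlt : ℓ (v * s i) < ℓ (u * s i)) : u * s i = v := by
  obtain ⟨t, ⟨ht, htv⟩, rfl⟩ := h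
  have hv := cs.length_mul_simple v i
  have hvt := cs.length_mul_simple (v * t) i
  obtain ⟨ρ, hρ, hρv⟩ := cs.exists_isReduced (v * s i)
  have hlenρ : ρ.length = ℓ (v * s i) := by rw [← hρ.eq, hρv]
  have hρi : π (ρ ++ [i]) = v := by
    rw [wordProd_append, wordProd_singleton, ← hρv, simple_mul_simple_cancel_right]
  obtain ⟨φ, hφ, hφv⟩ :=
    BruhatChain.exists_sublist (.single (⟨t, ⟨ht, htv⟩, rfl⟩ : cs.BruhatStep (v * t) v)) hρi
  have hφlen : ℓ (v * t) ≤ φ.length := hφv ▸ cs.length_wordProd_le φ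
  -- the lengths force `ℓ (v t) = ℓ (v s)`, so `φ` cannot use a letter of `ρ` together with `s`
  rcases List.sublist_append_singleton_iff.mp hφ with hφ | ⟨φ₁, hφ₁, rfl⟩
  · rw [← hφv, hφ.eq_of_length_le (by omega), ← hρv, simple_mul_simple_cancel_right]
  · have hφ₁v : v * t * s i = π φ₁ := by
      rw [← hφv, wordProd_append, wordProd_singleton, simple_mul_simple_cancel_right]
    have := cs.length_wordProd_le φ₁
    have := hφ₁.length_le
    rw [hφ₁v] at hlt
    omega

theorem BruhatStep.mul_simple_or {u v : W} (h : cs.BruhatStep u v) (i : B) :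
    cs.BruhatChain (u * s i) v ∨ cs.BruhatChain (u * s i) (v * s i) := by
  obtain ⟨t, ⟨ht, hlt⟩, rfl⟩ := h
  have ht' : cs.IsReflection (s i * t * s i) := by simpa using ht.conj (s i)
  rcases lt_or_gt_of_ne (ht'.length_mul_left_ne (v * s i)) with hlt' | hgt
  · refine .inr (.single ⟨s i * t * s i, ⟨ht', hlt'⟩, ?_⟩)
    simp [mul_assoc]
  · left
    rw [BruhatStep.mul_simple_eq_of_length_lt ⟨t, ⟨ht, hlt⟩, rfl⟩ (by simpa [mul_assoc] using hgt)]
    exact .refl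

theorem BruhatChain.mul_simple_or {u v : W} (h : cs.BruhatChain u v) (i : B) :
    cs.BruhatChain (u * s i) v ∨ cs.BruhatChain (u * s i) (v * s i) := by
  induction h with
  | refl => exact .inr .refl
  | tail _ hstep ih =>
    rcases ih with hub | hubs
    · exact .inl (hub.tail hstep)
    · rcases hstep.mul_simple_or i with hbc | hbcs
      · exact .inl (hubs.trans hbc)
      · exact .inr (hubs.trans hbcs)

theorem bruhatChain_of_sublist {φ ω : List B} (hω : cs.IsReduced ω) (h : φ.Sublist ω) :
    cs.BruhatChain (π φ) (π ω) := by
  induction ω using List.reverseRecOn generalizing φ with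
  | nil =>
    rw [List.sublist_nil.mp h]
    exact .refl
  | append_singleton ω i ih =>
    have hstep : cs.BruhatStep (π ω) (π ω * s i) := by
      simpa using bruhatStep_mul_simple_of_isRightDescent (isRightDescent_wordProd_mul_simple cs hω)
    rw [wordProd_append, wordProd_singleton]
    rcases List.sublist_append_singleton_iff.mp h with hφω | ⟨φ, hφω, rfl⟩
    · exact (ih hω.of_append_singleton hφω).tail hstep
    · rw [wordProd_append, wordProd_singleton]
      rcases (ih hω.of_append_singleton hφω).mul_simple_or i with hle | hle
      · exact hle.tail hstep
      · exact hle

theorem BruhatChain.ite_mul_simple_of_append_singleton {x : W} {ω : List B} {i : B}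
    (hx : cs.BruhatChain x (π (ω ++ [i]))) (hω : cs.IsReduced (ω ++ [i])) :
    cs.BruhatChain (if cs.IsRightDescent x i then x * s i else x) (π ω) := by
  obtain ⟨φ, hφ, rfl⟩ := hx.exists_sublist rfl
  rcases List.sublist_append_singleton_iff.mp hφ with hφ | ⟨φ₁, hφ₁, rfl⟩
  · have hle := bruhatChain_of_sublist hω.of_append_singleton hφ
    split_ifs with hd
    · exact hle.mul_simple_of_isRightDescent hd
    · exact hle
  · have hle := bruhatChain_of_sublist hω.of_append_singleton hφ₁
    rw [wordProd_append, wordProd_singleton]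
    split_ifs with hd
    · rwa [simple_mul_simple_cancel_right]
    · exact hle.mul_simple_of_isRightDescent
        (cs.isRightDescent_iff_not_isRightDescent_mul.mpr hd)

theorem greedyAux_reverse_eq_one {x : W} {ω : List B} (hω : cs.IsReduced ω)
    (hx : cs.BruhatChain x (π ω)) : greedyAux cs x ω.reverse = 1 := by
  induction ω using List.reverseRecOn generalizing x with
  | nil =>
    obtain ⟨φ, hφ, rfl⟩ := hx.exists_sublist rfl
    rw [List.sublist_nil.mp hφ]
    rfl
  | append_singleton ω i ih =>
    rw [List.reverse_append, List.reverse_singleton, List.singleton_append, greedyAux]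
    exact ih hω.of_append_singleton (hx.ite_mul_simple_of_append_singleton hω)

end CoxeterSystem

/-- If `ω` is a reduced expression for `w` and `x ≤ w` in Bruhat order, then the greedy
algorithm applied to `x`, reading the letters of `ω` from right to left, terminates at the
identity. -/
theorem greedy_reaches_one (cs : CoxeterSystem M W) {w x : W} {ω : List B}
    (hred : cs.IsReduced ω) (hprod : cs.wordProd ω = w) (hx : bruhatLE cs x w) :
    greedyAux cs x ω.reverse = 1 := by
  obtain ⟨ω', φ, hred', rfl, hφ, rfl⟩ := hx
  exact cs.greedyAux_reverse_eq_one hred (hprod ▸ cs.bruhatChain_of_sublist hred' hφ)
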